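/- Let G = (V,E) be a finite undirected graph with |V| ≥ 2, let k ≥ 1 be an integer, and let H be a spanning subgraph of G. Then H is a feasible k-EFTS solution — that is, for every pair of vertices u, v ∈ V and every F ⊆ E with |F| ≤ k−1, if u and v are connected in G∖F then u and v are connected in H∖F — if and only if d_H(A) ≥ min{k, d_G(A)} for every set A with ∅ ≠ A ⊊ V. -/
import Mathlib


open SimpleGraph

/-- Edges of `G` with exactly one endpoint in `A`. -/
def delta {V : Type*} (G : SimpleGraph V) (A : Set V) : Set (Sym2 V) :=
  {e | e ∈ G.edgeSet ∧ ∃ u v, e = s(u, v) ∧ u ∈ A ∧ v ∉ A}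

private lemma walk_stay {V : Type*} {K : SimpleGraph V} {A : Set V}
    (h : ∀ x y : V, K.Adj x y → x ∈ A → y ∈ A) :
    ∀ {u v : V}, K.Walk u v → u ∈ A → v ∈ A
  | _, _, .nil, hu => hu
  | _, _, .cons hadj p, hu => walk_stay h p (h _ _ hadj hu)

private lemma reach_stay {V : Type*} {K : SimpleGraph V} {A : Set V}
    (h : ∀ x y : V, K.Adj x y → x ∈ A → y ∈ A) {u v : V}
    (hr : K.Reachable u v) (hu : u ∈ A) : v ∈ A := by
  obtain ⟨w⟩ := hr
  exact walk_stay h w hu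

private lemma delta_mono {V : Type*} {H G : SimpleGraph V} (hH : H ≤ G) (A : Set V) :
    delta H A ⊆ delta G A := by
  rintro e ⟨he, x, y, rfl, hx, hy⟩
  exact ⟨(SimpleGraph.edgeSet_subset_edgeSet.2 hH) he, x, y, rfl, hx, hy⟩

theorem stmt_11 {V : Type*} [Fintype V] (hV : 2 ≤ Fintype.card V)
    (G : SimpleGraph V) (k : ℕ) (hk : 1 ≤ k)
    (H : SimpleGraph V) (hH : H ≤ G) :
    -- H is a feasible k-EFTS solution
    (∀ u v : V, ∀ F : Set (Sym2 V), F ⊆ G.edgeSet → F.ncard ≤ k - 1 →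
        (G.deleteEdges F).Reachable u v → (H.deleteEdges F).Reachable u v)
    ↔
    -- iff d_H(A) ≥ min(k, d_G(A)) for every nonempty proper A ⊆ V
    (∀ A : Set V, A.Nonempty → A ≠ Set.univ →
      min k (delta G A).ncard ≤ (delta H A).ncard) := by
  have hfinSym : Finite (Sym2 V) := by infer_instance
  constructor
  · intro h A hA hAu
    by_contra hlt
    push_neg at hlt
    set F : Set (Sym2 V) := delta H A with hF
    have hFG : F ⊆ delta G A := delta_mono hH A
    have hFE : F ⊆ G.edgeSet := fun e he => (hFG he).1
    have hFk : F.ncard < k := lt_of_lt_of_le hlt (min_le_left _ _)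
    have hFcard : F.ncard ≤ k - 1 := by omega
    have hFlt : F.ncard < (delta G A).ncard :=
      lt_of_lt_of_le hlt (min_le_right _ _)
    -- find an edge of G crossing A not in F
    have hss : F ⊂ delta G A := by
      refine ⟨hFG, fun hsub => ?_⟩
      have := Set.ncard_le_ncard hsub (Set.toFinite F)
      omega
    obtain ⟨e, heG, heF⟩ := Set.exists_of_ssubset hss
    obtain ⟨heE, x, y, rfl, hx, hy⟩ := heG
    have hadj : (G.deleteEdges F).Adj x y := by
      rw [SimpleGraph.deleteEdges_adj]
      exact ⟨(G.mem_edgeSet).1 heE, heF⟩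
    have hreach := h x y F hFE hFcard hadj.reachable
    -- but no edge of H ∖ F crosses A
    have hstay : ∀ a b : V, (H.deleteEdges F).Adj a b → a ∈ A → b ∈ A := by
      intro a b hab ha
      rw [SimpleGraph.deleteEdges_adj] at hab
      by_contra hb
      exact hab.2 ⟨(H.mem_edgeSet).2 hab.1, a, b, rfl, ha, hb⟩
    exact hy (reach_stay hstay hreach hx)
  · intro hcut u v F hFE hFcard hreach
    by_contra hnr
    set A : Set V := {x | (H.deleteEdges F).Reachable u x} with hAdef
    have huA : u ∈ A := SimpleGraph.Reachable.refl u
    have hvA : v ∉ A := hnr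
    have hAne : A.Nonempty := ⟨u, huA⟩
    have hAuniv : A ≠ Set.univ := fun h => hvA (h ▸ Set.mem_univ v)
    -- every H-edge crossing A lies in F
    have hHF : delta H A ⊆ F := by
      rintro e ⟨heE, x, y, rfl, hx, hy⟩
      by_contra heF
      have hadj : (H.deleteEdges F).Adj x y := by
        rw [SimpleGraph.deleteEdges_adj]
        exact ⟨(H.mem_edgeSet).1 heE, heF⟩
      exact hy (hx.trans hadj.reachable)
    have hdH : (delta H A).ncard ≤ F.ncard := Set.ncard_le_ncard hHF (Set.toFinite F)
    have hdHk : (delta H A).ncard < k := by omega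
    have hmin := hcut A hAne hAuniv
    have hdG : (delta G A).ncard ≤ (delta H A).ncard := by
      rcases min_le_iff.1 hmin with h1 | h1
      · omega
      · exact h1
    have heq : delta H A = delta G A :=
      Set.eq_of_subset_of_ncard_le (delta_mono hH A) hdG (Set.toFinite _)
    -- no edge of G ∖ F crosses A
    have hstay : ∀ a b : V, (G.deleteEdges F).Adj a b → a ∈ A → b ∈ A := by
      intro a b hab ha
      rw [SimpleGraph.deleteEdges_adj] at hab
      by_contra hb
      have : s(a, b) ∈ delta G A := ⟨(G.mem_edgeSet).2 hab.1, a, b, rfl, ha, hb⟩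
      exact hab.2 (hHF (heq ▸ this))
    exact hvA (reach_stay hstay hreach huA)
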